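/- arXiv:2005.00444 — 4 statements merged into one kernel-verified Lean document; each statement's English description precedes it below -/
import Mathlib

section
/- Let Π be a real symplectic 2n×2n matrix, and let B_V ∈ ℝ^{2v×2v}, B_W ∈ ℝ^{2w×2w}, R_V ∈ ℝ^{2n×2v}, R_W ∈ ℝ^{2n×2w} satisfy Π R_V = R_V B_V and Π R_W = R_W B_W, with B_V and B_W invertible. If the spectra of B_V and of B_W⁻¹ are disjoint (over ℂ), then R_Vᵀ J R_W = 0 and R_Wᵀ J R_V = 0. -/
open Matrix

noncomputable def Jmat (n : ℕ) : Matrix (Fin n ⊕ Fin n) (Fin n ⊕ Fin n) ℝ :=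
  Matrix.fromBlocks 0 1 (-1) 0

open Polynomial in
private lemma eval_charpoly_det' {m : Type*} [Fintype m] [DecidableEq m]
    (N : Matrix m m ℂ) (μ : ℂ) :
    N.charpoly.eval μ = (μ • (1 : Matrix m m ℂ) - N).det := by
  rw [Matrix.charpoly, ← Polynomial.coe_evalRingHom, RingHom.map_det]
  congr 1
  ext i j
  by_cases h : i = j <;>
    simp [h, charmatrix_apply, Matrix.one_apply, Matrix.diagonal_apply]

private lemma mem_spectrum_iff_det' {m : Type*} [Fintype m] [DecidableEq m]
    (N : Matrix m m ℂ) (μ : ℂ) :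
    μ ∈ spectrum ℂ N ↔ (μ • (1 : Matrix m m ℂ) - N).det = 0 := by
  rw [spectrum.mem_iff, Matrix.isUnit_iff_isUnit_det, isUnit_iff_ne_zero, not_ne_iff,
    Algebra.algebraMap_eq_smul_one]

open Polynomial in
private lemma aeval_matrix_map' {m : Type*} [Fintype m] [DecidableEq m]
    (M : Matrix m m ℝ) (p : ℝ[X]) :
    (Polynomial.aeval M p).map (algebraMap ℝ ℂ) =
      Polynomial.aeval (M.map (algebraMap ℝ ℂ)) (p.map (algebraMap ℝ ℂ)) := by
  rw [Polynomial.aeval_def, Polynomial.aeval_def, Polynomial.eval₂_map]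
  have h := Polynomial.hom_eval₂ p (algebraMap ℝ (Matrix m m ℝ))
    ((algebraMap ℝ ℂ).mapMatrix) M
  have e : ((algebraMap ℝ ℂ).mapMatrix : Matrix m m ℝ →+* Matrix m m ℂ).comp
      (algebraMap ℝ (Matrix m m ℝ)) = (algebraMap ℂ (Matrix m m ℂ)).comp (algebraMap ℝ ℂ) := by
    ext r i j
    by_cases hij : i = j <;>
      simp [Matrix.algebraMap_eq_diagonal, Matrix.diagonal_apply, hij, Matrix.map_apply]
  rw [e] at h
  simpa [RingHom.mapMatrix_apply] using h

open Polynomial in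
private lemma aeval_comm' {α β : Type*} [Fintype α] [DecidableEq α] [Fintype β] [DecidableEq β]
    (X : Matrix α α ℝ) (A : Matrix α β ℝ) (Y : Matrix β β ℝ)
    (h : X * A = A * Y) (p : ℝ[X]) :
    (Polynomial.aeval X p) * A = A * Polynomial.aeval Y p := by
  have hpow : ∀ k : ℕ, X ^ k * A = A * Y ^ k := by
    intro k
    induction k with
    | zero => simp
    | succ k ih =>
      calc X ^ (k + 1) * A = X ^ k * (X * A) := by rw [pow_succ, Matrix.mul_assoc]
        _ = X ^ k * A * Y := by rw [h, Matrix.mul_assoc]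
        _ = A * (Y ^ k * Y) := by rw [ih, Matrix.mul_assoc]
        _ = A * Y ^ (k + 1) := by rw [← pow_succ]
  induction p using Polynomial.induction_on' with
  | add p q hp hq => rw [map_add, map_add, Matrix.add_mul, Matrix.mul_add, hp, hq]
  | monomial k a =>
    rw [Polynomial.aeval_monomial, Polynomial.aeval_monomial,
      ← Algebra.smul_def a (X ^ k), ← Algebra.smul_def a (Y ^ k),
      Matrix.smul_mul, Matrix.mul_smul, hpow k]

/-- J-orthogonality of invariant subspaces of a symplectic matrix corresponding to
eigenvalue sets `spec B_V` and `spec B_W⁻¹` that are disjoint. -/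
theorem J_orthogonality (n v w : ℕ)
    (P : Matrix (Fin n ⊕ Fin n) (Fin n ⊕ Fin n) ℝ)
    (hP : Pᵀ * Jmat n * P = Jmat n)
    (RV : Matrix (Fin n ⊕ Fin n) (Fin v ⊕ Fin v) ℝ)
    (RW : Matrix (Fin n ⊕ Fin n) (Fin w ⊕ Fin w) ℝ)
    (BV : Matrix (Fin v ⊕ Fin v) (Fin v ⊕ Fin v) ℝ)
    (BW : Matrix (Fin w ⊕ Fin w) (Fin w ⊕ Fin w) ℝ)
    (hV : P * RV = RV * BV) (hW : P * RW = RW * BW)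
    (hBV : IsUnit BV) (hBW : IsUnit BW)
    (hdisj : ∀ μ : ℂ, μ ∈ spectrum ℂ (BV.map (Complex.ofReal ·)) →
      μ ∉ spectrum ℂ ((BW⁻¹).map (Complex.ofReal ·))) :
    RVᵀ * Jmat n * RW = 0 ∧ RWᵀ * Jmat n * RV = 0 := by
  have hBWdet : IsUnit BW.det := (Matrix.isUnit_iff_isUnit_det _).mp hBW
  -- Step 1
  have e1 : BVᵀ * (RVᵀ * Jmat n * RW) * BW = RVᵀ * Jmat n * RW := by
    have h1 : BVᵀ * (RVᵀ * Jmat n * RW) * BW = (RV * BV)ᵀ * Jmat n * (RW * BW) := by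
      rw [Matrix.transpose_mul]
      simp only [Matrix.mul_assoc]
    rw [← hV, ← hW, Matrix.transpose_mul] at h1
    calc BVᵀ * (RVᵀ * Jmat n * RW) * BW = RVᵀ * Pᵀ * Jmat n * (P * RW) := h1
      _ = RVᵀ * (Pᵀ * Jmat n * P) * RW := by simp only [Matrix.mul_assoc]
      _ = RVᵀ * Jmat n * RW := by rw [hP, Matrix.mul_assoc]
  obtain ⟨A, hA⟩ : ∃ A, RVᵀ * Jmat n * RW = A := ⟨_, rfl⟩
  rw [hA] at e1
  -- Step 2
  have e2 : BVᵀ * A = A * BW⁻¹ := by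
    have := congrArg (· * BW⁻¹) e1
    simpa [Matrix.mul_assoc, Matrix.mul_nonsing_inv _ hBWdet] using this
  set p := Matrix.charpoly BVᵀ with hp
  have hCH : A * Polynomial.aeval BW⁻¹ p = 0 := by
    rw [← aeval_comm' _ _ _ e2 p, Matrix.aeval_self_charpoly, Matrix.zero_mul]
  set Q := Polynomial.aeval BW⁻¹ p with hQ
  have hQC : Q.map (algebraMap ℝ ℂ) =
      Polynomial.aeval ((BW⁻¹).map (algebraMap ℝ ℂ)) (p.map (algebraMap ℝ ℂ)) :=
    aeval_matrix_map' _ _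
  have hpc : p.map (algebraMap ℝ ℂ) = Matrix.charpoly ((BVᵀ).map (algebraMap ℝ ℂ)) := by
    rw [hp, Matrix.charpoly_map]
  have hQunit : IsUnit (Q.map (algebraMap ℝ ℂ)) := by
    rw [← spectrum.zero_notMem_iff (R := ℂ)]
    intro h0
    rcases v with _ | v'
    · have hp1 : p = 1 := by
        rw [hp, Matrix.charpoly]
        exact Matrix.det_eq_one_of_card_eq_zero (by simp)
      rw [hQC, hp1] at h0
      rw [Polynomial.map_one, _root_.map_one] at h0
      exact (spectrum.zero_notMem_iff (R := ℂ)).mpr isUnit_one h0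
    · have hdeg : 0 < (p.map (algebraMap ℝ ℂ)).degree := by
        rw [hpc]
        have hmono := Matrix.charpoly_monic ((BVᵀ).map (algebraMap ℝ ℂ))
        rw [Polynomial.degree_eq_natDegree hmono.ne_zero, Matrix.charpoly_natDegree_eq_dim]
        exact_mod_cast Fintype.card_pos
      rw [hQC, spectrum.map_polynomial_aeval_of_degree_pos _ _ hdeg] at h0
      obtain ⟨μ, hμmem, hμeval⟩ := h0
      have hroot : (Matrix.charpoly ((BVᵀ).map (algebraMap ℝ ℂ))).eval μ = 0 := by
        rw [← hpc]; exact hμeval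
      rw [eval_charpoly_det'] at hroot
      have hmemBV : μ ∈ spectrum ℂ (BV.map (Complex.ofReal ·)) := by
        show μ ∈ spectrum ℂ (BV.map (algebraMap ℝ ℂ))
        rw [mem_spectrum_iff_det']
        have heq : (μ • (1 : Matrix (Fin (v'+1) ⊕ Fin (v'+1)) (Fin (v'+1) ⊕ Fin (v'+1)) ℂ) -
            BV.map (algebraMap ℝ ℂ))ᵀ = μ • 1 - (BVᵀ).map (algebraMap ℝ ℂ) := by
          rw [Matrix.transpose_sub, Matrix.transpose_smul, Matrix.transpose_one,
            Matrix.transpose_map]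
        rw [← Matrix.det_transpose, heq, hroot]
      exact hdisj μ hmemBV hμmem
  have hQR : IsUnit Q := by
    rw [Matrix.isUnit_iff_isUnit_det, isUnit_iff_ne_zero] at hQunit ⊢
    intro hdet
    apply hQunit
    have hd : (algebraMap ℝ ℂ) Q.det = (Q.map (algebraMap ℝ ℂ)).det := by
      rw [RingHom.map_det, RingHom.mapMatrix_apply]
    rw [← hd, hdet, map_zero]
  have hA0 : A = 0 := by
    have hQdet : IsUnit Q.det := (Matrix.isUnit_iff_isUnit_det _).mp hQR
    calc A = A * (Q * Q⁻¹) := by rw [Matrix.mul_nonsing_inv _ hQdet, Matrix.mul_one]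
      _ = (A * Q) * Q⁻¹ := by rw [Matrix.mul_assoc]
      _ = 0 := by rw [hCH, Matrix.zero_mul]
  rw [hA]
  refine ⟨hA0, ?_⟩
  have hJT : (Jmat n)ᵀ = -(Jmat n) := by
    rw [Jmat, Matrix.fromBlocks_transpose]
    simp [Matrix.fromBlocks_neg]
  have ht : Aᵀ = -(RWᵀ * Jmat n * RV) := by
    rw [← hA, Matrix.transpose_mul, Matrix.transpose_mul, Matrix.transpose_transpose, hJT]
    simp only [Matrix.mul_neg, Matrix.neg_mul, Matrix.mul_assoc]
  rw [hA0] at ht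
  simp only [Matrix.transpose_zero] at ht
  exact (neg_eq_zero.mp ht.symm)
end

section
/- Let Â ∈ ℝ^{2n×2n} be symmetric and set A = JÂ. Let R_V ∈ ℝ^{2n×2v} be such that R_Vᵀ J R_V is invertible and let S_V = (R_Vᵀ J R_V)⁻¹ R_Vᵀ J. Then trace(S_V A R_V) = 0. -/
open Matrix

/-- If `Â` is symmetric and `A = J Â`, then `trace(S_V A R_V) = 0`. -/
theorem trace_vanishes_for_hamiltonian_part (n v : ℕ)
    (Ahat : Matrix (Fin n ⊕ Fin n) (Fin n ⊕ Fin n) ℝ) (hsym : Ahatᵀ = Ahat)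
    (RV : Matrix (Fin n ⊕ Fin n) (Fin v ⊕ Fin v) ℝ)
    (hGV : IsUnit (RVᵀ * Jmat n * RV)) :
    ((RVᵀ * Jmat n * RV)⁻¹ * (RVᵀ * Jmat n) * (Jmat n * Ahat) * RV).trace = 0 := by
  set J := Jmat n with hJ
  have hJT : Jᵀ = -J := by
    simp only [hJ, Jmat, Matrix.fromBlocks_transpose, Matrix.fromBlocks_neg,
      Matrix.transpose_zero, Matrix.transpose_one, Matrix.transpose_neg, neg_neg, neg_zero]
  have hJJ : J * J = -1 := by
    simp only [hJ, Jmat, Matrix.fromBlocks_multiply, ← Matrix.fromBlocks_one,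
      Matrix.fromBlocks_neg, Matrix.mul_zero, Matrix.zero_mul, Matrix.mul_one,
      Matrix.one_mul, Matrix.neg_mul, Matrix.mul_neg, zero_add, add_zero, neg_zero, neg_neg]
  set G := RVᵀ * J * RV with hG
  set M := RVᵀ * Ahat * RV with hM
  have hMT : Mᵀ = M := by
    simp [hM, Matrix.transpose_mul, hsym, Matrix.mul_assoc]
  have hGT : Gᵀ = -G := by
    simp [hG, Matrix.transpose_mul, hJT, Matrix.mul_assoc]
  have hGinvT : (G⁻¹)ᵀ = -G⁻¹ := by
    rw [Matrix.transpose_nonsing_inv, hGT]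
    refine Matrix.inv_eq_right_inv ?_
    rw [Matrix.neg_mul, Matrix.mul_neg, neg_neg,
      Matrix.mul_nonsing_inv G ((Matrix.isUnit_iff_isUnit_det G).mp hGV)]
  have hexpr : G⁻¹ * (RVᵀ * J) * (J * Ahat) * RV = -(G⁻¹ * M) := by
    have : G⁻¹ * (RVᵀ * J) * (J * Ahat) * RV = G⁻¹ * (RVᵀ * (J * J) * Ahat * RV) := by
      simp only [Matrix.mul_assoc]
    rw [this, hJJ, hM]
    simp only [Matrix.neg_mul, Matrix.mul_neg, Matrix.one_mul, Matrix.mul_one, Matrix.mul_assoc]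
  rw [hexpr, Matrix.trace_neg, neg_eq_zero]
  have h1 : (G⁻¹ * M).trace = (Mᵀ * (G⁻¹)ᵀ).trace := by
    rw [← Matrix.trace_transpose (G⁻¹ * M), Matrix.transpose_mul]
  have h2 : (Mᵀ * (G⁻¹)ᵀ).trace = -(G⁻¹ * M).trace := by
    rw [hMT, hGinvT, Matrix.mul_neg, Matrix.trace_neg, Matrix.trace_mul_comm]
  have := h1.trans h2
  linarith
end

section
/- Consider the 2×2 matrix family M(ε) = [[1 + ε(a₁₁ − a a₂₁), −a + ε(a₁₂ − a a₂₂)],[ε a₂₁, 1 + ε a₂₂]] with a ≠ 0. If a·a₂₁ < 0, then for all sufficiently small ε > 0 the matrix M(ε) has a real eigenvalue strictly greater than 1. -/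
open Matrix Polynomial


private lemma charpoly_fin_two' (M : Matrix (Fin 2) (Fin 2) ℝ) :
    M.charpoly = X ^ 2 - C M.trace * X + C M.det := by
  rw [Matrix.charpoly, Matrix.det_fin_two, Matrix.trace_fin_two, Matrix.det_fin_two,
    charmatrix_apply_eq, charmatrix_apply_eq,
    charmatrix_apply_ne _ _ _ (by decide : (0:Fin 2) ≠ 1),
    charmatrix_apply_ne _ _ _ (by decide : (1:Fin 2) ≠ 0)]
  simp only [map_sub, _root_.map_mul, map_add, map_neg]
  ring

/-- If `a ≠ 0` and `a·a₂₁ < 0`, then for all sufficiently small `ε > 0` the matrix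
`M(ε) = [[1 + ε(a₁₁ − a a₂₁), −a + ε(a₁₂ − a a₂₂)],[ε a₂₁, 1 + ε a₂₂]]`
has a real eigenvalue strictly greater than `1`. -/
theorem unstable_eigenvalue_of_negative_discriminant
    (a a11 a12 a21 a22 : ℝ) (ha : a ≠ 0) (hsign : a * a21 < 0) :
    ∃ ε₁ > (0:ℝ), ∀ ε : ℝ, 0 < ε → ε < ε₁ →
      ∃ lam : ℝ, 1 < lam ∧
        (Matrix.charpoly
          !![1 + ε * (a11 - a * a21), -a + ε * (a12 - a * a22);
             ε * a21, 1 + ε * a22]).IsRoot lam := by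
  set D0 : ℝ := -(a * a21) with hD0
  have hD0pos : 0 < D0 := by simp [hD0]; linarith
  set C0 : ℝ := (a11 - a * a21) * a22 - a21 * (a12 - a * a22) with hC0
  refine ⟨D0 / (|C0| + 1), by positivity, ?_⟩
  intro ε hε hε1
  set T : ℝ := a11 - a * a21 + a22 with hT
  set t : ℝ := 2 + ε * T with ht
  set d : ℝ := (1 + ε * (a11 - a * a21)) * (1 + ε * a22)
      - (-a + ε * (a12 - a * a22)) * (ε * a21) with hd
  have hcut : ε * (|C0| + 1) < D0 := by
    have h1 : 0 < |C0| + 1 := by positivity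
    calc ε * (|C0| + 1) < D0 / (|C0| + 1) * (|C0| + 1) := by
          exact mul_lt_mul_of_pos_right hε1 h1
      _ = D0 := by field_simp
  have hgap : 0 < D0 - ε * C0 := by
    have : ε * C0 ≤ ε * |C0| := by
      exact mul_le_mul_of_nonneg_left (le_abs_self C0) hε.le
    nlinarith
  have hdisc : t ^ 2 - 4 * d = ε ^ 2 * T ^ 2 + 4 * ε * (D0 - ε * C0) := by
    simp only [ht, hd, hT, hD0, hC0]; ring
  have hDpos : 0 < t ^ 2 - 4 * d := by
    rw [hdisc]; nlinarith
  set s : ℝ := Real.sqrt (t ^ 2 - 4 * d) with hs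
  have hsnn : 0 ≤ s := Real.sqrt_nonneg _
  have hs2 : s ^ 2 = t ^ 2 - 4 * d := Real.sq_sqrt hDpos.le
  have hbig : -(ε * T) < s := by nlinarith [sq_nonneg (s - ε * T), sq_nonneg (s + ε * T)]
  refine ⟨(t + s) / 2, by simp only [ht]; nlinarith, ?_⟩
  rw [charpoly_fin_two']
  have htr : (!![1 + ε * (a11 - a * a21), -a + ε * (a12 - a * a22);
      ε * a21, 1 + ε * a22]).trace = t := by
    rw [Matrix.trace_fin_two]
    simp [ht, hT]; ring
  have hdet : (!![1 + ε * (a11 - a * a21), -a + ε * (a12 - a * a22);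
      ε * a21, 1 + ε * a22]).det = d := by
    rw [Matrix.det_fin_two]
    simp [hd]
  rw [htr, hdet]
  simp only [Polynomial.IsRoot, Polynomial.eval_add, Polynomial.eval_sub,
    Polynomial.eval_mul, Polynomial.eval_pow, Polynomial.eval_X, Polynomial.eval_C]
  linear_combination hs2 / 4
end

section
/- Uniform contraction: let g(t) be a family of 2n×2n matrices of the block form g(t) = [[0,0],[Q_q(t), −αI]] where each Q_q(t) is symmetric n×n and α ∈ ℝ. Let X(t) be symplectic matrices and let R_V ∈ ℝ^{2n×2v} have invertible R_Vᵀ J R_V with symplectic left inverse S_V. Then for every t, trace(S_V X(t)⁻¹ g(t) X(t) R_V) = −vα. Consequently C_V := −(1/(Tv)) ∫₀^T trace(S_V X(t)⁻¹ g(t) X(t) R_V) dt = α. -/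
open Matrix intervalIntegral

lemma Jmat_sq (n : ℕ) : Jmat n * Jmat n = -1 := by
  simp [Jmat, Matrix.fromBlocks_multiply, ← Matrix.fromBlocks_one, Matrix.fromBlocks_neg]

lemma Jmat_transpose (n : ℕ) : (Jmat n)ᵀ = -(Jmat n) := by
  simp [Jmat, Matrix.fromBlocks_transpose, Matrix.fromBlocks_neg]

/-- Abstract key trace computation. -/
lemma key_trace {m k : Type*} [Fintype m] [Fintype k] [DecidableEq m] [DecidableEq k]
    (J S Y : Matrix m m ℝ) (R : Matrix m k ℝ) (c : ℝ)
    (hJ2 : J * J = -1) (hJT : Jᵀ = -J) (hST : Sᵀ = S) (hY : Yᵀ * J * Y = J)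
    (hG : IsUnit (Rᵀ * J * R)) :
    ((Rᵀ * J * R)⁻¹ * (Rᵀ * J) * Y⁻¹ * (J * S - c • 1) * Y * R).trace
      = -c * (Fintype.card k) := by
  have hGdet : IsUnit (Rᵀ * J * R).det := (Matrix.isUnit_iff_isUnit_det _).mp hG
  have hGinv : (Rᵀ * J * R)⁻¹ * (Rᵀ * J * R) = 1 := Matrix.nonsing_inv_mul _ hGdet
  have hGT : (Rᵀ * J * R)ᵀ = -(Rᵀ * J * R) := by
    rw [Matrix.transpose_mul, Matrix.transpose_mul, Matrix.transpose_transpose, hJT]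
    simp [Matrix.mul_neg, Matrix.neg_mul, Matrix.mul_assoc]
  have hGinvT : ((Rᵀ * J * R)⁻¹)ᵀ = -(Rᵀ * J * R)⁻¹ := by
    rw [Matrix.transpose_nonsing_inv]
    refine Matrix.inv_eq_left_inv ?_
    rw [hGT]; simp [Matrix.neg_mul, Matrix.mul_neg, hGinv]
  have hPT : (R * (Rᵀ * J * R)⁻¹ * Rᵀ)ᵀ = -(R * (Rᵀ * J * R)⁻¹ * Rᵀ) := by
    rw [Matrix.transpose_mul, Matrix.transpose_mul, Matrix.transpose_transpose, hGinvT]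
    simp [Matrix.mul_neg, Matrix.neg_mul, Matrix.mul_assoc]
  have hXi : -(J * Yᵀ * J) * Y = 1 := by
    have h : -(J * Yᵀ * J) * Y = -(J * (Yᵀ * J * Y)) := by
      simp [Matrix.neg_mul, Matrix.mul_assoc]
    rw [h, hY, hJ2]; simp
  have hYinv : Y⁻¹ = -(J * Yᵀ * J) := Matrix.inv_eq_left_inv hXi
  set M : Matrix m m ℝ := Yᵀ * S * Y with hMdef
  have hMT : Mᵀ = M := by
    rw [hMdef, Matrix.transpose_mul, Matrix.transpose_mul, Matrix.transpose_transpose, hST,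
      Matrix.mul_assoc]
  have hconj : Y⁻¹ * (J * S - c • 1) * Y = J * M - c • 1 := by
    rw [hYinv, hMdef, Matrix.mul_sub, Matrix.sub_mul]
    congr 1
    · have : -(J * Yᵀ * J) * (J * S) = -(J * Yᵀ * (J * J) * S) := by
        simp [Matrix.neg_mul, Matrix.mul_assoc]
      rw [this, hJ2]
      simp [Matrix.mul_neg, Matrix.neg_mul, Matrix.mul_assoc]
    · rw [Matrix.mul_smul, Matrix.mul_one, Matrix.smul_mul, hXi]
  have expand : (Rᵀ * J * R)⁻¹ * (Rᵀ * J) * Y⁻¹ * (J * S - c • 1) * Y * R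
      = (Rᵀ * J * R)⁻¹ * (Rᵀ * J) * (Y⁻¹ * (J * S - c • 1) * Y) * R := by
    simp [Matrix.mul_assoc]
  rw [expand, hconj]
  have hJJ : ∀ (Z : Matrix m k ℝ), J * (J * Z) = -Z := by
    intro Z; rw [← Matrix.mul_assoc, hJ2]; simp
  have e2 : (Rᵀ * J * R)⁻¹ * (Rᵀ * J) * (J * M - c • 1) * R
      = -((Rᵀ * J * R)⁻¹ * (Rᵀ * (M * R))) - c • ((Rᵀ * J * R)⁻¹ * (Rᵀ * J * R)) := by
    simp only [Matrix.mul_sub, Matrix.sub_mul, Matrix.mul_smul, Matrix.smul_mul,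
      Matrix.mul_one, Matrix.mul_assoc, hJJ, Matrix.mul_neg, Matrix.neg_mul]
  rw [e2, hGinv, Matrix.trace_sub, Matrix.trace_neg, Matrix.trace_smul, Matrix.trace_one]
  have htrMP : ((Rᵀ * J * R)⁻¹ * (Rᵀ * (M * R))).trace
      = (M * (R * (Rᵀ * J * R)⁻¹ * Rᵀ)).trace := by
    rw [Matrix.trace_mul_comm ((Rᵀ * J * R)⁻¹) (Rᵀ * (M * R)),
      show Rᵀ * (M * R) * (Rᵀ * J * R)⁻¹ = Rᵀ * (M * (R * (Rᵀ * J * R)⁻¹)) by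
        simp [Matrix.mul_assoc],
      Matrix.trace_mul_comm Rᵀ (M * (R * (Rᵀ * J * R)⁻¹))]
    congr 1
    simp [Matrix.mul_assoc]
  have hMP0 : (M * (R * (Rᵀ * J * R)⁻¹ * Rᵀ)).trace = 0 := by
    set P := R * (Rᵀ * J * R)⁻¹ * Rᵀ with hP
    have h1 : (M * P).trace = ((M * P)ᵀ).trace := (Matrix.trace_transpose _).symm
    rw [Matrix.transpose_mul, hPT, hMT, Matrix.neg_mul, Matrix.trace_neg,
      Matrix.trace_mul_comm] at h1
    rw [Matrix.trace_mul_comm]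
    linarith
  rw [htrMP, hMP0]
  simp [smul_eq_mul]

/-- Uniform contraction: for `g(t) = [[0,0],[Q_q(t), −αI]]` with `Q_q(t)` symmetric,
`X(t)` symplectic and `S_V` the symplectic left inverse of `R_V`, the trace
`trace(S_V X(t)⁻¹ g(t) X(t) R_V)` equals `−vα` for every `t`, and hence the
volume contraction `C_V = −(1/(Tv)) ∫₀ᵀ trace(...) dt` equals `α`. -/
theorem uniform_contraction (n v : ℕ) (hv : 0 < v) (α T : ℝ) (hT : 0 < T)
    (Qq : ℝ → Matrix (Fin n) (Fin n) ℝ) (hQ : ∀ t, (Qq t)ᵀ = Qq t)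
    (g : ℝ → Matrix (Fin n ⊕ Fin n) (Fin n ⊕ Fin n) ℝ)
    (hg : ∀ t, g t = Matrix.fromBlocks 0 0 (Qq t) (-(α • (1 : Matrix (Fin n) (Fin n) ℝ))))
    (X : ℝ → Matrix (Fin n ⊕ Fin n) (Fin n ⊕ Fin n) ℝ)
    (hX : ∀ t, (X t)ᵀ * Jmat n * X t = Jmat n)
    (RV : Matrix (Fin n ⊕ Fin n) (Fin v ⊕ Fin v) ℝ)
    (hGV : IsUnit (RVᵀ * Jmat n * RV)) :
    (∀ t, ((RVᵀ * Jmat n * RV)⁻¹ * (RVᵀ * Jmat n) * (X t)⁻¹ * g t * X t * RV).trace =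
        -(v : ℝ) * α) ∧
    -(1 / (T * v)) * ∫ t in (0:ℝ)..T,
        ((RVᵀ * Jmat n * RV)⁻¹ * (RVᵀ * Jmat n) * (X t)⁻¹ * g t * X t * RV).trace = α := by
  have key : ∀ t, ((RVᵀ * Jmat n * RV)⁻¹ * (RVᵀ * Jmat n) * (X t)⁻¹ * g t * X t * RV).trace
      = -(v : ℝ) * α := by
    intro t
    have hgdec : g t = Jmat n * (Matrix.fromBlocks (-(Qq t)) ((α/2) • 1) ((α/2) • 1) 0)
        - (α/2) • 1 := by
      rw [hg t, Jmat, Matrix.fromBlocks_multiply, ← Matrix.fromBlocks_one,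
        Matrix.fromBlocks_smul, sub_eq_add_neg, Matrix.fromBlocks_neg, Matrix.fromBlocks_add]
      ext i j
      rcases i with i | i <;> rcases j with j | j <;>
        by_cases h : i = j <;>
        simp [Matrix.one_apply, h] <;> ring
    have hST : (Matrix.fromBlocks (-(Qq t)) ((α/2) • 1) ((α/2) • 1) 0
        : Matrix (Fin n ⊕ Fin n) (Fin n ⊕ Fin n) ℝ)ᵀ
        = Matrix.fromBlocks (-(Qq t)) ((α/2) • 1) ((α/2) • 1) 0 := by
      rw [Matrix.fromBlocks_transpose]
      simp [hQ t]
    have := key_trace (Jmat n) (Matrix.fromBlocks (-(Qq t)) ((α/2) • 1) ((α/2) • 1) 0)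
      (X t) RV (α/2) (Jmat_sq n) (Jmat_transpose n) hST (hX t) hGV
    rw [← hgdec] at this
    rw [this]
    simp [Fintype.card_sum]
    ring
  refine ⟨key, ?_⟩
  have hInt : ∫ t in (0:ℝ)..T,
      ((RVᵀ * Jmat n * RV)⁻¹ * (RVᵀ * Jmat n) * (X t)⁻¹ * g t * X t * RV).trace
      = ∫ t in (0:ℝ)..T, (-(v : ℝ) * α) := by
    apply intervalIntegral.integral_congr
    intro t _; exact key t
  rw [hInt, intervalIntegral.integral_const]
  have hv' : (v : ℝ) ≠ 0 := Nat.cast_ne_zero.mpr hv.ne'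
  have hT' : T ≠ 0 := hT.ne'
  field_simp
  ring
end
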